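/- For an integer k ≥ 3, a graph G is k-chordal if and only if it admits a k-simplicial ordering of its vertices. -/

import Mathlib

open SimpleGraph

variable {V : Type*}

/-- Open neighbourhood of a set of vertices. -/
def setNbhd (G : SimpleGraph V) (A : Set V) : Set V :=
  {x | x ∉ A ∧ ∃ a ∈ A, G.Adj a x}

/-- Closed neighbourhood of a set of vertices. -/
def closedNbhd (G : SimpleGraph V) (A : Set V) : Set V :=
  A ∪ setNbhd G A

/-- `A` is a connected non-dominating set: `G[A]` is connected and `N[A] ⊊ V`. -/
def ConnNonDom (G : SimpleGraph V) (A : Set V) : Prop :=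
  (G.induce A).Connected ∧ closedNbhd G A ≠ Set.univ

/-- `A` is a maximal connected non-dominating set. -/
def MaxConnNonDom (G : SimpleGraph V) (A : Set V) : Prop :=
  ConnNonDom G A ∧ ∀ A' : Set V, A ⊆ A' → ConnNonDom G A' → A' = A

/-- `G` is not complete. -/
def NonComplete (G : SimpleGraph V) : Prop :=
  ∃ u v : V, u ≠ v ∧ ¬ G.Adj u v

/-- A chordless (induced) path. -/
def IsInducedPath (G : SimpleGraph V) {x y : V} (p : G.Walk x y) : Prop :=
  p.IsPath ∧ ∀ u w : V, u ∈ p.support → w ∈ p.support → G.Adj u w → s(u, w) ∈ p.edges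

/-- A chordless (induced) cycle. -/
def IsInducedCycle (G : SimpleGraph V) {v : V} (c : G.Walk v v) : Prop :=
  c.IsCycle ∧ ∀ u w : V, u ∈ c.support → w ∈ c.support → G.Adj u w → s(u, w) ∈ c.edges

/-- `G` is `k`-chordal: no induced cycle of length greater than `k`. -/
def KChordal (G : SimpleGraph V) (k : ℕ) : Prop :=
  ∀ ⦃v : V⦄ (c : G.Walk v v), IsInducedCycle G c → c.length ≤ k

/-- `u` is an internal vertex of the path `p`. -/
def InternalVert (G : SimpleGraph V) {x y : V} (p : G.Walk x y) (u : V) : Prop :=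
  u ∈ p.support ∧ u ≠ x ∧ u ≠ y

/-- Condition (C1): any two distinct neighbours of `v` are at distance at most `k-2`
in `G - v`. -/
def SimpC1 (G : SimpleGraph V) (k : ℕ) (v : V) : Prop :=
  ∀ x y : V, G.Adj v x → G.Adj v y → x ≠ y →
    ∃ (hx : x ≠ v) (hy : y ≠ v)
      (p : (G.induce {u : V | u ≠ v}).Walk ⟨x, hx⟩ ⟨y, hy⟩), p.length ≤ k - 2

/-- Condition (C2): every induced path between non-adjacent neighbours of `v` whose
internal vertices avoid `N[v]` has at most `k-2` edges. -/
def SimpC2 (G : SimpleGraph V) (k : ℕ) (v : V) : Prop :=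
  ∀ x y : V, G.Adj v x → G.Adj v y → ¬ G.Adj x y → x ≠ y →
    ∀ p : G.Walk x y, IsInducedPath G p →
      (∀ u : V, InternalVert G p u → u ≠ v ∧ ¬ G.Adj v u) →
      p.length ≤ k - 2

/-- `v` is `k`-simplicial in `G`. -/
def KSimplicial (G : SimpleGraph V) (k : ℕ) (v : V) : Prop :=
  SimpC1 G k v ∧ SimpC2 G k v

/-- Vertices at position `≥ i` in the ordering `σ`. -/
def laterSet {V : Type*} [Fintype V] (σ : Fin (Fintype.card V) ≃ V)
    (i : Fin (Fintype.card V)) : Set V := {w | i ≤ σ.symm w}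

/-- `σ` is a `k`-simplicial ordering of the vertices of `G`. -/
def KSimplicialOrdering {V : Type*} [Fintype V] (G : SimpleGraph V) (k : ℕ)
    (σ : Fin (Fintype.card V) ≃ V) : Prop :=
  ∀ i : Fin (Fintype.card V),
    KSimplicial (G.induce (laterSet σ i)) k ⟨σ i, by simp [laterSet]⟩

/-- `S` separates `a` from `b`. -/
def IsSeparator (G : SimpleGraph V) (a b : V) (S : Set V) : Prop :=
  a ∉ S ∧ b ∉ S ∧ ∀ p : G.Walk a b, ∃ s ∈ S, s ∈ p.support

/-- `S` is a minimal `(a,b)`-vertex separator. -/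
def IsMinSeparator (G : SimpleGraph V) (a b : V) (S : Set V) : Prop :=
  IsSeparator G a b S ∧ ∀ T : Set V, T ⊂ S → ¬ IsSeparator G a b T

/-- `S` is a minimal vertex separator of `G`. -/
def IsMinVertexSeparator (G : SimpleGraph V) (S : Set V) : Prop :=
  ∃ a b : V, a ≠ b ∧ ¬ G.Adj a b ∧ IsMinSeparator G a b S

/-- `u` lies in the connected component `c` of `G - S`. -/
def InComponent (G : SimpleGraph V) (S : Set V)
    (c : (G.induce Sᶜ).ConnectedComponent) (u : V) : Prop :=
  ∃ h : u ∈ Sᶜ, (G.induce Sᶜ).connectedComponentMk ⟨u, h⟩ = c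

/-- `v` is 3-simplicial: its neighbourhood is a clique. -/
def Simplicial3 (G : SimpleGraph V) (v : V) : Prop :=
  ∀ x y : V, G.Adj v x → G.Adj v y → x ≠ y → G.Adj x y


/-!
Adding the vertex `v` turns an induced path between two non-adjacent neighbours of `v` whose
interior avoids `N[v]` into an induced cycle through `v` of length at least four, and every such
cycle arises this way. So (C2) holds at every vertex of a `k`-chordal graph, and conversely the
earliest vertex of a long induced cycle in a `k`-simplicial ordering would violate (C2) in the
subgraph of the vertices from it onwards.

A vertex satisfying (C1) is found by induction on the number of vertices. In a non-complete graph
take a maximal connected non-dominating set `A`. Maximality makes every vertex of `N(A)` adjacent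
to every vertex outside `N[A]`, so a vertex satisfying (C1) in `G - N[A]` satisfies it in `G`:
two of its non-adjacent neighbours in `N(A)` are joined by an induced path through `A`, to which
(C2) applies. As `k`-chordality is hereditary, such vertices can be peeled off one at a time.
-/

namespace SimpleGraph

variable {W : Type*} {G : SimpleGraph V} {H : SimpleGraph W} {u v : V}

lemma Walk.isChordless_of_length_eq_dist {p : G.Walk u v} (hp : p.length = G.dist u v) :
    p.IsChordless := by
  classical
  -- a segment of a shortest walk is shortest, so a segment joining adjacent vertices is an edge
  have segment : ∀ {a b : V} (q : G.Walk a b), q.IsSubwalk p → G.Adj a b → s(a, b) ∈ p.edges := by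
    intro a b q hq hab
    have hlen : q.length = 1 := (length_eq_dist_of_subwalk hp hq).trans (dist_eq_one_iff_adj.2 hab)
    refine hq.edges_subset ?_
    rcases q with _ | ⟨h, _ | ⟨_, _⟩⟩ <;> simp_all
  rw [Walk.isChordless_iff_forall_mem_edges]
  intro a b ha hb hab
  rw [← p.take_spec ha, Walk.mem_support_append_iff] at hb
  rcases hb with hb | hb
  · rw [Sym2.eq_swap]
    exact segment _ (((p.takeUntil a ha).isSubwalk_dropUntil hb).trans
      (p.isSubwalk_takeUntil ha)) hab.symm
  · exact segment _ (((p.dropUntil a ha).isSubwalk_takeUntil hb).trans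
      (p.isSubwalk_dropUntil ha)) hab

lemma Walk.isChordless_map_iff (f : G ↪g H) {p : G.Walk u v} :
    (p.map f.toHom).IsChordless ↔ p.IsChordless := by
  simp only [Walk.isChordless_iff_forall_mem_edges, Walk.support_map, Walk.edges_map]
  constructor
  · intro h a b ha hb hab
    have := h (List.mem_map_of_mem ha) (List.mem_map_of_mem hb) (f.map_adj_iff.2 hab)
    rwa [← Sym2.map_mk,
      List.mem_map_of_injective (Sym2.map.injective (f := f.toHom) f.injective)] at this
  · intro h a' b' ha' hb' hab
    obtain ⟨a, ha, rfl⟩ := List.mem_map.1 ha'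
    obtain ⟨b, hb, rfl⟩ := List.mem_map.1 hb'
    rw [← Sym2.map_mk]
    exact List.mem_map_of_mem (h ha hb (f.map_adj_iff.1 hab))

lemma Walk.exists_eq_cons_concat {u w : V} (p : G.Walk u w) (hp : 2 ≤ p.length) :
    ∃ (x y : V) (hux : G.Adj u x) (hyw : G.Adj y w) (P : G.Walk x y),
      p = Walk.cons hux (P.concat hyw) ∧ p.length = P.length + 2 := by
  cases p with
  | nil => simp at hp
  | cons hux q =>
    have hq : ¬ q.Nil := by
      rw [Walk.not_nil_iff_lt_length]
      simp only [Walk.length_cons] at hp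
      omega
    refine ⟨_, _, hux, q.adj_penultimate hq, q.dropLast, by rw [Walk.concat_dropLast], ?_⟩
    rw [Walk.length_cons, ← Walk.length_dropLast_add_one hq]

@[simp]
lemma Walk.length_induce {s : Set V} (p : G.Walk u v) (hs : ∀ w ∈ p.support, w ∈ s) :
    (p.induce s hs).length = p.length := by
  induction p with
  | nil => rfl
  | cons h p ih => simp [ih]

end SimpleGraph

open SimpleGraph

section InducedWalks

variable {W : Type*} {G : SimpleGraph V} {H : SimpleGraph W} {u v x y : V}

lemma isInducedPath_iff {p : G.Walk x y} : IsInducedPath G p ↔ p.IsPath ∧ p.IsChordless := by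
  rw [Walk.isChordless_iff_forall_mem_edges]
  rfl

lemma isInducedCycle_iff {c : G.Walk v v} : IsInducedCycle G c ↔ c.IsCycle ∧ c.IsChordless := by
  rw [Walk.isChordless_iff_forall_mem_edges]
  rfl

lemma SimpleGraph.Reachable.exists_isInducedPath (h : G.Reachable x y) :
    ∃ p : G.Walk x y, IsInducedPath G p := by
  obtain ⟨p, hp⟩ := h.exists_walk_length_eq_dist
  exact ⟨p, isInducedPath_iff.2 ⟨p.isPath_of_length_eq_dist hp, p.isChordless_of_length_eq_dist hp⟩⟩

lemma IsInducedPath.map (f : G ↪g H) {p : G.Walk x y} (hp : IsInducedPath G p) :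
    IsInducedPath H (p.map f.toHom) := by
  rw [isInducedPath_iff] at hp ⊢
  exact ⟨(Walk.isPath_map_iff_of_injective f.injective).2 hp.1, (Walk.isChordless_map_iff f).2 hp.2⟩

lemma isInducedCycle_map_iff (f : G ↪g H) {c : G.Walk v v} :
    IsInducedCycle H (c.map f.toHom) ↔ IsInducedCycle G c := by
  simp only [isInducedCycle_iff, Walk.isCycle_map_iff_of_injective (f := f.toHom) f.injective,
    Walk.isChordless_map_iff]

lemma IsInducedCycle.induce {s : Set V} {c : G.Walk v v} (hc : IsInducedCycle G c)
    (hs : ∀ w ∈ c.support, w ∈ s) : IsInducedCycle (G.induce s) (c.induce s hs) := by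
  rwa [← isInducedCycle_map_iff (Embedding.induce s), Walk.map_induce]

lemma IsInducedCycle.rotate [DecidableEq V] {c : G.Walk v v} (hc : IsInducedCycle G c)
    (hu : u ∈ c.support) : IsInducedCycle G (c.rotate u hu) :=
  ⟨hc.1.rotate hu, fun a b ha hb hab => (c.rotate_edges u hu).perm.mem_iff.2
    (hc.2 a b ((c.mem_support_rotate_iff u hu).1 ha) ((c.mem_support_rotate_iff u hu).1 hb) hab)⟩

lemma KChordal.induce {k : ℕ} (hG : KChordal G k) (s : Set V) : KChordal (G.induce s) k :=
  fun _ c hc => by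
    have := hG _ ((isInducedCycle_map_iff (Embedding.induce s)).2 hc)
    rwa [Walk.length_map] at this

end InducedWalks

section Simplicial

variable {G : SimpleGraph V} {k : ℕ} {v x y : V}

lemma isInducedCycle_cons_concat (hvx : G.Adj v x) (hyv : G.Adj y v) (hne : x ≠ y)
    {P : G.Walk x y} (hP : IsInducedPath G P)
    (hint : ∀ u, InternalVert G P u → u ≠ v ∧ ¬ G.Adj v u) :
    IsInducedCycle G (Walk.cons hvx (P.concat hyv)) := by
  have hvP : v ∉ P.support := fun h => (hint v ⟨h, hvx.ne, hyv.ne'⟩).1 rfl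
  have hends : ∀ u ∈ P.support, G.Adj v u → u = x ∨ u = y := fun u hu hvu => by
    by_contra! h
    exact (hint u ⟨hu, h.1, h.2⟩).2 hvu
  refine ⟨(Walk.cons_isCycle_iff _ _).2 ⟨?_, ?_⟩, ?_⟩
  · exact (Walk.concat_isPath_iff hyv).2 ⟨hP.1, hvP⟩
  · simp only [Walk.edges_concat, List.concat_eq_append, List.mem_append, List.mem_singleton,
      Sym2.eq_iff]
    rintro (h | h)
    · exact hvP (P.fst_mem_support_of_mem_edges h)
    · grind [G.ne_of_adj]
  · intro a b ha hb hab
    simp only [Walk.support_cons, Walk.support_concat, List.mem_cons, List.mem_append,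
      List.not_mem_nil, or_false] at ha hb
    simp only [Walk.edges_cons, Walk.edges_concat, List.concat_eq_append, List.mem_cons,
      List.mem_append, List.not_mem_nil, or_false, Sym2.eq_iff]
    have := hP.2 a b
    have := hends a
    have := hends b
    have := hab.symm
    grind [G.ne_of_adj]

lemma KChordal.simpC2 (hG : KChordal G k) (v : V) : SimpC2 G k v := by
  intro x y hvx hvy hxy hne P hP hint
  have := hG _ (isInducedCycle_cons_concat hvx hvy.symm hne hP hint)
  rw [Walk.length_cons, Walk.length_concat] at this
  omega

lemma IsInducedCycle.isInducedPath_of_cons_concat {P : G.Walk x y} (hvx : G.Adj v x)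
    (hyv : G.Adj y v) (hc : IsInducedCycle G (Walk.cons hvx (P.concat hyv))) (hP : 2 ≤ P.length) :
    IsInducedPath G P ∧ ¬ G.Adj x y ∧ x ≠ y ∧
      ∀ u, InternalVert G P u → u ≠ v ∧ ¬ G.Adj v u := by
  obtain ⟨hPpath, hvP⟩ := (Walk.concat_isPath_iff hyv).1 ((Walk.cons_isCycle_iff _ _).1 hc.1).1
  have hxy : x ≠ y := by
    rintro rfl
    have := Walk.length_eq_zero_iff.2 (Walk.isPath_iff_nil.1 hPpath)
    omega
  have hchord : ∀ a b, a ∈ P.support → b ∈ P.support → G.Adj a b →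
      s(a, b) ∈ P.edges ∨ a = v ∨ b = v := by
    intro a b ha hb hab
    have := hc.2 a b (by simp [ha]) (by simp [hb]) hab
    simp only [Walk.edges_cons, Walk.edges_concat, List.concat_eq_append, List.mem_cons,
      List.mem_append, List.not_mem_nil, or_false, Sym2.eq_iff] at this
    tauto
  refine ⟨⟨hPpath, fun a b ha hb hab => ?_⟩, fun hadj => ?_, hxy, fun u ⟨hu, hux, huy⟩ => ?_⟩
  · grind
  · obtain h | h | h := hchord x y P.start_mem_support P.end_mem_support hadj
    · have := hPpath.length_eq_one_of_mem_edges h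
      omega
    all_goals exact hvP (h ▸ by simp)
  · have hvu : u ≠ v := fun h => hvP (h ▸ hu)
    refine ⟨hvu, fun hadj => ?_⟩
    have := hc.2 v u (by simp) (by simp [hu]) hadj
    simp only [Walk.edges_cons, Walk.edges_concat, List.concat_eq_append, List.mem_cons,
      List.mem_append, List.not_mem_nil, or_false, Sym2.eq_iff, true_and] at this
    obtain (h | ⟨-, h⟩) | h | ⟨-, h⟩ | h := this
    · exact hux h
    · exact hvu h
    · exact hvP (P.fst_mem_support_of_mem_edges h)
    · exact hvu h
    · exact huy h

lemma IsInducedCycle.length_le_of_simpC2 (hk : 3 ≤ k) {c : G.Walk v v}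
    (hc : IsInducedCycle G c) (h : SimpC2 G k v) : c.length ≤ k := by
  by_contra! hlt
  obtain ⟨x, y, hvx, hyv, P, rfl, hlen⟩ := c.exists_eq_cons_concat (by omega)
  obtain ⟨hP, hxy, hne, hint⟩ := hc.isInducedPath_of_cons_concat hvx hyv (by omega)
  have := h x y hvx hyv.symm hxy hne P hP hint
  omega

end Simplicial

section ConnNonDom

variable {G : SimpleGraph V} {k : ℕ} {A : Set V} {v x y : V}

lemma SimpC1.exists_walk (h : SimpC1 G k v) (hvx : G.Adj v x) (hvy : G.Adj v y) (hne : x ≠ y) :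
    ∃ p : G.Walk x y, v ∉ p.support ∧ p.length ≤ k - 2 := by
  obtain ⟨hx, hy, p, hp⟩ := h x y hvx hvy hne
  have hvp : v ∉ (p.map (Embedding.induce _).toHom).support := by
    rw [Walk.support_map, List.mem_map]
    rintro ⟨⟨w, hw⟩, -, hwv⟩
    exact hw hwv
  have hlen : (p.map (Embedding.induce _).toHom).length ≤ k - 2 := by rwa [Walk.length_map]
  exact ⟨_, hvp, hlen⟩

lemma simpC1_of_forall_not_adj (hk : 3 ≤ k)
    (h : ∀ x y, G.Adj v x → G.Adj v y → x ≠ y → ¬ G.Adj x y →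
      ∃ p : G.Walk x y, v ∉ p.support ∧ p.length ≤ k - 2) :
    SimpC1 G k v := by
  intro x y hvx hvy hne
  by_cases hxy : G.Adj x y
  · exact ⟨hvx.ne', hvy.ne', Adj.toWalk hxy, show 1 ≤ k - 2 by omega⟩
  obtain ⟨p, hvp, hp⟩ := h x y hvx hvy hne hxy
  have hs : ∀ w ∈ p.support, w ∈ {u | u ≠ v} := fun w hw hwv => hvp (hwv ▸ hw)
  exact ⟨hvx.ne', hvy.ne', p.induce _ hs, by rwa [Walk.length_induce]⟩

lemma exists_maxConnNonDom [Finite V] (h : NonComplete G) : ∃ A, MaxConnNonDom G A := by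
  obtain ⟨u, w, huw, hnadj⟩ := h
  have hu : ConnNonDom G {u} := by
    refine ⟨(connected_iff _).2 ⟨Preconnected.of_subsingleton, inferInstance⟩, fun huniv => ?_⟩
    have : w ∈ closedNbhd G {u} := huniv ▸ Set.mem_univ w
    simp only [closedNbhd, setNbhd, Set.mem_singleton_iff, exists_eq_left, Set.singleton_union,
      Set.mem_insert_iff, Set.mem_ofPred_eq] at this
    grind
  obtain ⟨A, -, hA⟩ := (Set.toFinite {A | ConnNonDom G A}).exists_le_maximal hu
  exact ⟨A, hA.1, fun A' hAA' hA' => (hA.2 hA' hAA').antisymm hAA'⟩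

lemma MaxConnNonDom.adj_of_mem_setNbhd {s b : V} (hA : MaxConnNonDom G A)
    (hs : s ∈ setNbhd G A) (hb : b ∉ closedNbhd G A) : G.Adj s b := by
  obtain ⟨hsA, a, ha, has⟩ := hs
  by_contra hsb
  have hconn : (G.induce (A ∪ {s})).Connected :=
    connected_induce_union hA.1.1.preconnected Preconnected.of_subsingleton ha rfl has
  have hdom : closedNbhd G (A ∪ {s}) ≠ Set.univ := by
    refine Set.ne_univ_iff_exists_notMem _ |>.2 ⟨b, ?_⟩
    simp only [closedNbhd, setNbhd, Set.mem_union, Set.mem_singleton_iff,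
      not_or] at hb ⊢
    grind
  have := hA.2 _ Set.subset_union_left ⟨hconn, hdom⟩
  exact hsA (this ▸ Set.mem_union_right A rfl)

lemma exists_isInducedPath_of_mem_setNbhd (hA : (G.induce A).Connected)
    (hx : x ∈ setNbhd G A) (hy : y ∈ setNbhd G A) :
    ∃ P : G.Walk x y, IsInducedPath G P ∧ ∀ u, InternalVert G P u → u ∈ A := by
  obtain ⟨-, a, ha, hax⟩ := hx
  obtain ⟨-, b, hb, hby⟩ := hy
  set T := {x} ∪ A ∪ {y}
  have hT : (G.induce T).Connected :=
    connected_induce_union (t := {y}) (connected_induce_union (s := {x})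
      Preconnected.of_subsingleton hA.preconnected rfl ha hax.symm).preconnected
      Preconnected.of_subsingleton (Or.inr hb) rfl hby
  obtain ⟨Q, hQ⟩ :=
    Reachable.exists_isInducedPath (hT.preconnected ⟨x, by simp [T]⟩ ⟨y, by simp [T]⟩)
  have hint : ∀ u, InternalVert G (Q.map (Embedding.induce T).toHom) u → u ∈ A := by
    rintro u ⟨hu, hux, huy⟩
    rw [Walk.support_map, List.mem_map] at hu
    obtain ⟨⟨u, huT⟩, -, rfl⟩ := hu
    change u ≠ x at hux
    change u ≠ y at huy
    simp only [T, Set.mem_union, Set.mem_singleton_iff] at huT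
    change u ∈ A
    tauto
  exact ⟨_, hQ.map (Embedding.induce T), hint⟩

lemma MaxConnNonDom.simpC1_of_simpC1_induce (hG : KChordal G k) (hk : 3 ≤ k)
    (hA : MaxConnNonDom G A) (hv : v ∈ (closedNbhd G A)ᶜ)
    (h : SimpC1 (G.induce (closedNbhd G A)ᶜ) k ⟨v, hv⟩) : SimpC1 G k v := by
  have hvA : v ∉ closedNbhd G A := hv
  have hvA' : v ∉ A := fun h => hvA (Or.inl h)
  have hnbr : ∀ z, G.Adj v z → z ∈ setNbhd G A ∨ z ∈ (closedNbhd G A)ᶜ := by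
    intro z hvz
    by_contra! hz
    have hzA : z ∈ A := by simpa [closedNbhd, hz.1] using hz.2
    exact hvA (Or.inr ⟨hvA', z, hzA, hvz.symm⟩)
  refine simpC1_of_forall_not_adj hk fun x y hvx hvy hne hxy => ?_
  rcases hnbr x hvx with hx | hx <;> rcases hnbr y hvy with hy | hy
  · obtain ⟨P, hP, hPA⟩ := exists_isInducedPath_of_mem_setNbhd hA.1.1 hx hy
    have hint : ∀ u, InternalVert G P u → u ≠ v ∧ ¬ G.Adj v u := fun u hu => by
      have huA := hPA u hu
      exact ⟨fun huv => hvA' (huv ▸ huA), fun hvu => hvA (Or.inr ⟨hvA', u, huA, hvu.symm⟩)⟩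
    exact ⟨P, fun hvP => (hint v ⟨hvP, hvx.ne, hvy.ne⟩).1 rfl,
      hG.simpC2 v x y hvx hvy hxy hne P hP hint⟩
  · exact absurd (hA.adj_of_mem_setNbhd hx hy) hxy
  · exact absurd (hA.adj_of_mem_setNbhd hy hx).symm hxy
  · obtain ⟨p, hvp, hp⟩ := h.exists_walk (x := ⟨x, hx⟩) (y := ⟨y, hy⟩) (by exact hvx)
      (by exact hvy) (by simpa using hne)
    have hvp' : v ∉ (p.map (Embedding.induce _).toHom).support := by
      rw [Walk.support_map, List.mem_map]
      rintro ⟨w, hw, hwv⟩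
      exact hvp ((Subtype.ext hwv : w = ⟨v, hv⟩) ▸ hw)
    have hlen : (p.map (Embedding.induce _).toHom).length ≤ k - 2 := by rwa [Walk.length_map]
    exact ⟨_, hvp', hlen⟩

theorem KChordal.exists_simpC1 [Finite V] [Nonempty V] (hG : KChordal G k) (hk : 3 ≤ k) :
    ∃ v, SimpC1 G k v := by
  induction hn : Nat.card V using Nat.strong_induction_on generalizing V with
  | _ n ih =>
    by_cases hc : NonComplete G
    · obtain ⟨A, hA⟩ := exists_maxConnNonDom hc
      obtain ⟨⟨a, ha⟩⟩ := hA.1.1.nonempty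
      have : Nonempty ↥(closedNbhd G A)ᶜ := (Set.nonempty_compl.2 hA.1.2).to_subtype
      have hlt : Nat.card ↥(closedNbhd G A)ᶜ < n :=
        hn ▸ Finite.card_subtype_lt (x := a) (by simp [closedNbhd, ha])
      obtain ⟨⟨v, hv⟩, hv1⟩ := ih _ hlt (hG.induce _) rfl
      exact ⟨v, hA.simpC1_of_simpC1_induce hG hk hv hv1⟩
    · obtain ⟨v⟩ := ‹Nonempty V›
      exact ⟨v, simpC1_of_forall_not_adj hk fun x y _ _ hne hxy => absurd ⟨x, y, hne, hxy⟩ hc⟩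

theorem KChordal.exists_kSimplicial [Finite V] [Nonempty V] (hG : KChordal G k) (hk : 3 ≤ k) :
    ∃ v, KSimplicial G k v :=
  (hG.exists_simpC1 hk).imp fun v hv => ⟨hv, hG.simpC2 v⟩

end ConnNonDom

section Ordering

variable {G : SimpleGraph V} {k : ℕ}

lemma laterSet_eq_image [Fintype V] (σ : Fin (Fintype.card V) ≃ V) (i : Fin (Fintype.card V)) :
    laterSet σ i = σ '' Set.Ici i := by
  rw [Equiv.image_eq_preimage_symm]
  rfl

lemma Finset.exists_greedy_enumeration (P : Set V → V → Prop)
    (hP : ∀ S : Set V, S.Nonempty → ∃ v ∈ S, P S v) {n : ℕ} {S : Finset V} (hS : S.card = n) :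
    ∃ f : Fin n → V, Function.Injective f ∧ Set.range f = S ∧ ∀ i, P (f '' Set.Ici i) (f i) := by
  classical
  induction n generalizing S with
  | zero =>
    refine ⟨Fin.elim0, Function.injective_of_subsingleton _, ?_, fun i => i.elim0⟩
    simp [Finset.card_eq_zero.1 hS]
  | succ n ih =>
    obtain ⟨v, hvS, hv⟩ := hP S (by simp [← Finset.card_pos, hS])
    obtain ⟨g, hg, hgS, hgP⟩ := ih (S := S.erase v) (by simp [Finset.card_erase_of_mem hvS, hS])
    have hrange : Set.range (Fin.cons v g : Fin (n + 1) → V) = S := by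
      rw [Fin.range_cons, hgS, Finset.coe_erase, Set.insert_sdiff_singleton,
        Set.insert_eq_of_mem hvS]
    refine ⟨Fin.cons v g, Fin.cons_injective_iff.2 ⟨by simp [hgS], hg⟩, hrange, ?_⟩
    refine Fin.cases ?_ fun i => ?_
    · simpa [hrange] using hv
    · rw [← Fin.image_succ_Ici, Set.image_image]
      simpa using hgP i

lemma exists_equiv_forall_laterSet [Fintype V] (P : Set V → V → Prop)
    (hP : ∀ S : Set V, S.Nonempty → ∃ v ∈ S, P S v) :
    ∃ σ : Fin (Fintype.card V) ≃ V, ∀ i, P (laterSet σ i) (σ i) := by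
  obtain ⟨f, hf, hfS, hfP⟩ := Finset.exists_greedy_enumeration P hP Finset.card_univ
  refine ⟨Equiv.ofBijective f ⟨hf, Set.range_eq_univ.1 (by simpa using hfS)⟩, fun i => ?_⟩
  rw [laterSet_eq_image]
  exact hfP i

lemma KSimplicialOrdering.kChordal [Fintype V] {σ : Fin (Fintype.card V) ≃ V}
    (hσ : KSimplicialOrdering G k σ) (hk : 3 ≤ k) : KChordal G k := by
  classical
  intro v c hc
  obtain ⟨i, hi, hmin⟩ := Finset.exists_min_image (Finset.univ.filter fun i => σ i ∈ c.support)
    id ⟨σ.symm v, by simp⟩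
  simp only [Finset.mem_filter, Finset.mem_univ, true_and, id] at hi hmin
  have hL : ∀ w ∈ (c.rotate (σ i) hi).support, w ∈ laterSet σ i := fun w hw =>
    hmin _ (by simpa using hw)
  have := ((hc.rotate hi).induce hL).length_le_of_simpC2 hk (hσ i).2
  rwa [Walk.length_induce, Walk.length_rotate] at this

end Ordering

theorem stmt11 [Fintype V] (G : SimpleGraph V) (k : ℕ) (hk : 3 ≤ k) :
    KChordal G k ↔ ∃ σ : Fin (Fintype.card V) ≃ V, KSimplicialOrdering G k σ := by
  refine ⟨fun hG => ?_, fun ⟨σ, hσ⟩ => hσ.kChordal hk⟩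
  obtain ⟨σ, hσ⟩ := exists_equiv_forall_laterSet
    (fun S v => ∃ hv : v ∈ S, KSimplicial (G.induce S) k ⟨v, hv⟩) fun S hS => by
      have : Nonempty S := hS.to_subtype
      obtain ⟨⟨v, hv⟩, hsimp⟩ := (hG.induce S).exists_kSimplicial hk
      exact ⟨v, hv, hv, hsimp⟩
  exact ⟨σ, fun i => (hσ i).2⟩
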